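/- Suppose a_ℓ ≤ (2ℓ/√M)·Σ_{t=1}^{⌊ℓ/2⌋} a_t·a_{ℓ−t} + s_ℓ for all ℓ ≥ 2, where a₁ ≤ M/D² and s_ℓ ≤ M·(c log M)^{ℓ−1}/D^{ℓ+1} with D ≥ √M ≥ 2, c ≥ 1, log M ≥ 1. Then a_ℓ ≤ C_ℓ · M·(c log M)^{ℓ−1}/D^{ℓ+1} for all ℓ ≥ 1, where C_ℓ depends only on ℓ. -/

import Mathlib

/-!
Strong induction on `ℓ`. The target profile `b ℓ = M (c log M)^(ℓ-1) / D^(ℓ+1)` is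
submultiplicative up to the factor `√M`: `b t * b (ℓ - t) = M² (c log M)^(ℓ-2) / D^(ℓ+2) ≤ √M * b ℓ`,
since `M ≤ √M D` and `c log M ≥ 1`. Hence the prefactor `1/√M` of the convolution absorbs the
product of two inductive bounds, and the constants only have to satisfy
`C ℓ = 2ℓ ∑ C t C (ℓ - t) + 1`.
-/

open Finset

noncomputable def recursionConst (n : ℕ) : ℝ :=
  if n ≤ 1 then 1
  else 2 * n * (∑ t ∈ (Icc 1 (n / 2)).attach, recursionConst t * recursionConst (n - t)) + 1
termination_by n
decreasing_by all_goals have := mem_Icc.mp t.2; omega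

theorem recursionConst_of_le_one {n : ℕ} (hn : n ≤ 1) : recursionConst n = 1 := by
  rw [recursionConst, if_pos hn]

theorem recursionConst_of_two_le {n : ℕ} (hn : 2 ≤ n) :
    recursionConst n =
      2 * n * (∑ t ∈ Icc 1 (n / 2), recursionConst t * recursionConst (n - t)) + 1 := by
  rw [recursionConst, if_neg (by omega),
    sum_attach _ fun t => recursionConst t * recursionConst (n - t)]

theorem recursionConst_pos (n : ℕ) : 0 < recursionConst n := by
  induction n using Nat.strong_induction_on with
  | _ n ih =>
    rcases le_or_gt n 1 with hn | hn
    · rw [recursionConst_of_le_one hn]; exact one_pos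
    · rw [recursionConst_of_two_le hn]
      have : 0 ≤ ∑ t ∈ Icc 1 (n / 2), recursionConst t * recursionConst (n - t) :=
        sum_nonneg fun t ht => by
          have := mem_Icc.mp ht
          exact (mul_pos (ih t (by omega)) (ih (n - t) (by omega))).le
      positivity

theorem le_recursionConst_mul_of_le_convolution {K : ℝ} (hK : 0 < K) {a b : ℕ → ℝ}
    (ha : ∀ ℓ, 0 ≤ a ℓ) (hb : ∀ ℓ, 0 ≤ b ℓ)
    (hb_mul : ∀ t ℓ, 1 ≤ t → t < ℓ → b t * b (ℓ - t) ≤ K * b ℓ)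
    (ha₁ : a 1 ≤ b 1)
    (hrec : ∀ ℓ, 2 ≤ ℓ → a ℓ ≤ (2 * ℓ / K) * ∑ t ∈ Icc 1 (ℓ / 2), a t * a (ℓ - t) + b ℓ) :
    ∀ ℓ, 1 ≤ ℓ → a ℓ ≤ recursionConst ℓ * b ℓ := by
  intro ℓ
  induction ℓ using Nat.strong_induction_on with
  | _ ℓ ih =>
    intro hℓ
    rcases hℓ.eq_or_lt with rfl | hℓ
    · simpa [recursionConst_of_le_one] using ha₁
    have hterm : ∀ t ∈ Icc 1 (ℓ / 2), a t * a (ℓ - t) ≤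
        recursionConst t * recursionConst (ℓ - t) * K * b ℓ := by
      intro t ht
      have ht := mem_Icc.mp ht
      calc a t * a (ℓ - t)
          ≤ (recursionConst t * b t) * (recursionConst (ℓ - t) * b (ℓ - t)) :=
            mul_le_mul (ih t (by omega) ht.1) (ih (ℓ - t) (by omega) (by omega)) (ha _)
              (mul_nonneg (recursionConst_pos t).le (hb t))
        _ = recursionConst t * recursionConst (ℓ - t) * (b t * b (ℓ - t)) := by ring
        _ ≤ recursionConst t * recursionConst (ℓ - t) * (K * b ℓ) :=
            mul_le_mul_of_nonneg_left (hb_mul t ℓ ht.1 (by omega))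
              (mul_pos (recursionConst_pos t) (recursionConst_pos _)).le
        _ = _ := by ring
    calc a ℓ ≤ (2 * ℓ / K) * ∑ t ∈ Icc 1 (ℓ / 2), a t * a (ℓ - t) + b ℓ := hrec ℓ hℓ
      _ ≤ (2 * ℓ / K) * ∑ t ∈ Icc 1 (ℓ / 2),
            recursionConst t * recursionConst (ℓ - t) * K * b ℓ + b ℓ := by
          gcongr _ * ?_ + _; exact sum_le_sum hterm
      _ = recursionConst ℓ * b ℓ := by
          rw [recursionConst_of_two_le hℓ, ← sum_mul, ← sum_mul]
          field_simp

theorem mul_pow_div_pow_mul_le {M D X : ℝ} (hM : 0 ≤ M) (hMD : √M ≤ D) (hX : 1 ≤ X)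
    {t ℓ : ℕ} (ht : 1 ≤ t) (htℓ : t < ℓ) :
    M * X ^ (t - 1) / D ^ (t + 1) * (M * X ^ (ℓ - t - 1) / D ^ (ℓ - t + 1)) ≤
      √M * (M * X ^ (ℓ - 1) / D ^ (ℓ + 1)) := by
  have hD : 0 ≤ D := (Real.sqrt_nonneg M).trans hMD
  have hXpow : X ^ (t - 1) * X ^ (ℓ - t - 1) = X ^ (ℓ - 2) := by
    rw [← pow_add]; congr 1; omega
  have hDpow : D ^ (t + 1) * D ^ (ℓ - t + 1) = D ^ (ℓ + 1) * D := by
    rw [← pow_add, ← pow_succ]; congr 1; omega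
  have hcore : M * X ^ (ℓ - 2) ≤ √M * X ^ (ℓ - 1) * D := by
    calc M * X ^ (ℓ - 2) = √M * √M * X ^ (ℓ - 2) := by rw [Real.mul_self_sqrt hM]
      _ ≤ √M * D * X ^ (ℓ - 1) := by gcongr; omega
      _ = _ := by ring
  calc M * X ^ (t - 1) / D ^ (t + 1) * (M * X ^ (ℓ - t - 1) / D ^ (ℓ - t + 1))
      = M * (M * X ^ (ℓ - 2)) / (D ^ (ℓ + 1) * D) := by
        rw [div_mul_div_comm, hDpow, ← hXpow]; ring
    _ ≤ M * (√M * X ^ (ℓ - 1) * D) / (D ^ (ℓ + 1) * D) := by gcongr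
    _ = √M * (M * X ^ (ℓ - 1) / D ^ (ℓ + 1)) := by
        rcases hD.eq_or_lt with rfl | hD
        · simp
        · field_simp

/-- Abstract form of the inductive trace-moment recursion: if
`a_ℓ ≤ (2ℓ/√M)·Σ_{t=1}^{⌊ℓ/2⌋} a_t a_{ℓ−t} + s_ℓ` for `ℓ ≥ 2`, with `a₁ ≤ M/D²` and
`s_ℓ ≤ M (c log M)^{ℓ−1}/D^{ℓ+1}`, where `D ≥ √M ≥ 2`, `c ≥ 1`, `log M ≥ 1`, then
`a_ℓ ≤ C_ℓ · M (c log M)^{ℓ−1}/D^{ℓ+1}` with `C_ℓ` depending only on `ℓ`. -/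
theorem trace_moment_recursion :
    ∃ C : ℕ → ℝ, (∀ ℓ, 0 < C ℓ) ∧
      ∀ (M D c : ℝ) (a s : ℕ → ℝ),
        2 ≤ Real.sqrt M → Real.sqrt M ≤ D → 1 ≤ c → 1 ≤ Real.log M →
        (∀ ℓ, 0 ≤ a ℓ) →
        a 1 ≤ M / D ^ 2 →
        (∀ ℓ : ℕ, 2 ≤ ℓ → s ℓ ≤ M * (c * Real.log M) ^ (ℓ - 1) / D ^ (ℓ + 1)) →
        (∀ ℓ : ℕ, 2 ≤ ℓ →
          a ℓ ≤ (2 * ℓ / Real.sqrt M) * ∑ t ∈ Finset.Icc 1 (ℓ / 2), a t * a (ℓ - t) + s ℓ) →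
        ∀ ℓ : ℕ, 1 ≤ ℓ → a ℓ ≤ C ℓ * M * (c * Real.log M) ^ (ℓ - 1) / D ^ (ℓ + 1) := by
  refine ⟨recursionConst, recursionConst_pos, ?_⟩
  intro M D c a s hM₂ hMD hc hlog ha ha₁ hs hrec ℓ hℓ
  have hsqrt : 0 < √M := by linarith
  have hM : 0 < M := Real.sqrt_pos.mp hsqrt
  have hX : 1 ≤ c * Real.log M := one_le_mul_of_one_le_of_one_le hc hlog
  have hb : ∀ ℓ : ℕ, 0 ≤ M * (c * Real.log M) ^ (ℓ - 1) / D ^ (ℓ + 1) := fun ℓ => by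
    have : 0 < D := hsqrt.trans_le hMD
    positivity
  have := le_recursionConst_mul_of_le_convolution hsqrt ha hb
    (fun t ℓ ht htℓ => mul_pow_div_pow_mul_le hM.le hMD hX ht htℓ) (by simpa using ha₁)
    (fun ℓ hℓ => (hrec ℓ hℓ).trans (by gcongr; exact hs ℓ hℓ)) ℓ hℓ
  simpa only [mul_div_assoc, mul_assoc] using this
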